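/- arXiv:1911.13145 — 8 statements merged into one kernel-verified Lean document; each statement's English description precedes it below -/
import Mathlib

section
/- The state ρ = q ρ₁ + (1−q) ρ₂ with q = 16/17, where ρ₁ has eigenvalues (1/2, 1/4, 1/4, 0) and ρ₂ has eigenvalues (1, 0, 0, 0) on orthogonal supports (so ρ has eigenvalues 8/17, 4/17, 4/17, 1/17), satisfies the absolute separability condition λ₁ − λ₃ − 2√(λ₂λ₄) ≤ 0, and its purity Tr(ρ²) = (64+16+16+1)/289 = 97/289 is strictly greater than 1/3. -/
/-- The state ρ = (16/17)ρ₁ + (1/17)ρ₂ with eigenvalues (8/17, 4/17, 4/17, 1/17) satisfies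
the absolute separability condition λ₁ − λ₃ − 2√(λ₂λ₄) ≤ 0, and its purity
Σλᵢ² = 97/289 is strictly greater than 1/3 (it lies outside the maximal ball). -/
theorem stmt4 :
    (8/17 : ℝ) - 4/17 - 2 * Real.sqrt ((4/17) * (1/17)) ≤ 0 ∧
    ((8/17 : ℝ)^2 + (4/17)^2 + (4/17)^2 + (1/17)^2 = 97/289 ∧ (97/289 : ℝ) > 1/3) := by
  have h : Real.sqrt ((4/17) * (1/17)) = 2/17 := by
    rw [show (4/17 : ℝ) * (1/17) = (2/17)^2 by norm_num]
    exact Real.sqrt_sq (by norm_num)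
  refine ⟨by rw [h]; norm_num, by norm_num, by norm_num⟩
end

section
/- Suppose λ₁ ≥ λ₂ ≥ λ₃ ≥ λ₄ > 0 sum to 1 and satisfy λ₁ − λ₃ = 2√(λ₂λ₄). Then for every ε with 0 < ε ≤ λ₄, the tuple with entries (λᵢ − ε)/(1 − 4ε) fails the absolute separability condition, i.e., λ₁ − λ₃ > 2√((λ₂ − ε)(λ₄ − ε)). -/
/-- If λ₁ ≥ λ₂ ≥ λ₃ ≥ λ₄ > 0 sum to 1 and λ₁ − λ₃ = 2√(λ₂λ₄), then for every
0 < ε ≤ λ₄ the shifted tuple fails the absolute separability condition: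
λ₁ − λ₃ > 2√((λ₂ − ε)(λ₄ − ε)). -/
theorem stmt6 (l1 l2 l3 l4 : ℝ)
    (h12 : l2 ≤ l1) (h23 : l3 ≤ l2) (h34 : l4 ≤ l3) (h4 : 0 < l4)
    (hsum : l1 + l2 + l3 + l4 = 1)
    (hbd : l1 - l3 = 2 * Real.sqrt (l2 * l4)) :
    ∀ ε : ℝ, 0 < ε → ε ≤ l4 →
      l1 - l3 > 2 * Real.sqrt ((l2 - ε) * (l4 - ε)) := by
  intro ε hε hεl4
  rw [hbd]
  have h2 : ε ≤ l2 := le_trans hεl4 (le_trans h34 h23)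
  have hlt : (l2 - ε) * (l4 - ε) < l2 * l4 := by nlinarith
  have hnn : 0 ≤ (l2 - ε) * (l4 - ε) := mul_nonneg (by linarith) (by linarith)
  have := Real.sqrt_lt_sqrt hnn hlt
  linarith
end

section
/- Suppose λ₁ ≥ λ₂ ≥ λ₃ ≥ λ₄ > 0 sum to 1 and satisfy the strict inequality λ₁ − λ₃ < 2√(λ₂λ₄), with not all λᵢ equal to 1/4. Then there exists ε with 0 < ε ≤ λ₄ such that λ₁ − λ₃ = 2√((λ₂ − ε)(λ₄ − ε)), i.e., the shifted eigenvalues (λᵢ − ε)/(1 − 4ε) satisfy the absolute separability condition with equality. -/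
/-- If λ₁ ≥ λ₂ ≥ λ₃ ≥ λ₄ > 0 sum to 1, satisfy the strict inequality
λ₁ − λ₃ < 2√(λ₂λ₄), and are not all equal to 1/4, then there exists 0 < ε ≤ λ₄ with
λ₁ − λ₃ = 2√((λ₂ − ε)(λ₄ − ε)). -/
theorem stmt7 (l1 l2 l3 l4 : ℝ)
    (h12 : l2 ≤ l1) (h23 : l3 ≤ l2) (h34 : l4 ≤ l3) (h4 : 0 < l4)
    (hsum : l1 + l2 + l3 + l4 = 1)
    (hstrict : l1 - l3 < 2 * Real.sqrt (l2 * l4))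
    (hne : ¬ (l1 = 1/4 ∧ l2 = 1/4 ∧ l3 = 1/4 ∧ l4 = 1/4)) :
    ∃ ε : ℝ, 0 < ε ∧ ε ≤ l4 ∧ l1 - l3 = 2 * Real.sqrt ((l2 - ε) * (l4 - ε)) := by
  set f : ℝ → ℝ := fun ε => 2 * Real.sqrt ((l2 - ε) * (l4 - ε)) with hf
  have hcont : Continuous f := by fun_prop
  have hfl4 : f l4 = 0 := by simp [hf]
  have hf0 : f 0 = 2 * Real.sqrt (l2 * l4) := by simp [hf]
  have hmem : l1 - l3 ∈ Set.Icc (f l4) (f 0) := by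
    constructor
    · rw [hfl4]; linarith [h23.trans h12]
    · rw [hf0]; exact le_of_lt hstrict
  obtain ⟨ε, hεmem, hεeq⟩ := intermediate_value_Icc' h4.le hcont.continuousOn hmem
  refine ⟨ε, ?_, hεmem.2, hεeq.symm⟩
  rcases hεmem.1.lt_or_eq with h | h
  · exact h
  · exfalso
    rw [← h, hf0] at hεeq
    linarith
end

section
/- Let (λ₁,…,λ₄) and (λ'₁,…,λ'₄) be two decreasingly ordered probability eigenvalue tuples each satisfying λ₁ − λ₃ = 2√(λ₂λ₄) and λ'₁ − λ'₃ = 2√(λ'₂λ'₄), with λ₄, λ'₄ > 0 and λ₂/λ₄ = λ'₂/λ'₄. Then for every x ∈ (0,1), the mixture μᵢ = xλᵢ + (1−x)λ'ᵢ also satisfies μ₁ − μ₃ = 2√(μ₂μ₄). -/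
/-- Two decreasingly ordered probability four-tuples on the boundary
(λ₁ − λ₃ = 2√(λ₂λ₄), λ'₁ − λ'₃ = 2√(λ'₂λ'₄)) with λ₄, λ'₄ > 0 and λ₂/λ₄ = λ'₂/λ'₄:
every mixture μᵢ = xλᵢ + (1−x)λ'ᵢ, 0 < x < 1, also satisfies μ₁ − μ₃ = 2√(μ₂μ₄). -/
theorem stmt8 (l1 l2 l3 l4 m1 m2 m3 m4 : ℝ)
    (hl12 : l2 ≤ l1) (hl23 : l3 ≤ l2) (hl34 : l4 ≤ l3) (hl4 : 0 < l4)
    (hm12 : m2 ≤ m1) (hm23 : m3 ≤ m2) (hm34 : m4 ≤ m3) (hm4 : 0 < m4)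
    (hlsum : l1 + l2 + l3 + l4 = 1) (hmsum : m1 + m2 + m3 + m4 = 1)
    (hlbd : l1 - l3 = 2 * Real.sqrt (l2 * l4))
    (hmbd : m1 - m3 = 2 * Real.sqrt (m2 * m4))
    (hratio : l2 / l4 = m2 / m4) :
    ∀ x : ℝ, 0 < x → x < 1 →
      (x * l1 + (1 - x) * m1) - (x * l3 + (1 - x) * m3) =
        2 * Real.sqrt ((x * l2 + (1 - x) * m2) * (x * l4 + (1 - x) * m4)) := by
  intro x hx0 hx1
  have hl2 : 0 ≤ l2 := hl4.le.trans (hl34.trans hl23)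
  have hm2 : 0 ≤ m2 := hm4.le.trans (hm34.trans hm23)
  have hcross : l2 * m4 = m2 * l4 := by
    field_simp at hratio
    linarith [hratio]
  have hA : Real.sqrt (l2 * l4) ^ 2 = l2 * l4 :=
    Real.sq_sqrt (mul_nonneg hl2 hl4.le)
  have hB : Real.sqrt (m2 * m4) ^ 2 = m2 * m4 :=
    Real.sq_sqrt (mul_nonneg hm2 hm4.le)
  have hAB : Real.sqrt (l2 * l4) * Real.sqrt (m2 * m4) = l2 * m4 := by
    rw [← Real.sqrt_mul (mul_nonneg hl2 hl4.le)]
    have : l2 * l4 * (m2 * m4) = (l2 * m4) ^ 2 := by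
      linear_combination (-(l2 * m4)) * hcross
    rw [this, Real.sqrt_sq (mul_nonneg hl2 hm4.le)]
  have key : Real.sqrt ((x * l2 + (1 - x) * m2) * (x * l4 + (1 - x) * m4))
      = x * Real.sqrt (l2 * l4) + (1 - x) * Real.sqrt (m2 * m4) := by
    have hnn : 0 ≤ x * Real.sqrt (l2 * l4) + (1 - x) * Real.sqrt (m2 * m4) := by
      have := Real.sqrt_nonneg (l2 * l4)
      have := Real.sqrt_nonneg (m2 * m4)
      nlinarith
    have hsq : (x * Real.sqrt (l2 * l4) + (1 - x) * Real.sqrt (m2 * m4)) ^ 2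
        = (x * l2 + (1 - x) * m2) * (x * l4 + (1 - x) * m4) := by
      linear_combination x ^ 2 * hA + (1 - x) ^ 2 * hB + 2 * x * (1 - x) * hAB +
        x * (1 - x) * hcross
    rw [← hsq, Real.sqrt_sq hnn]
  rw [key]
  linear_combination x * hlbd + (1 - x) * hmbd
end

section
/- Let (λᵢ) and (λ'ᵢ) be decreasingly ordered probability four-tuples with λ₁ − λ₃ < 2√(λ₂λ₄) and λ'₁ − λ'₃ < 2√(λ'₂λ'₄). Then for every x ∈ (0,1) the mixture μᵢ = xλᵢ + (1−x)λ'ᵢ satisfies μ₁ − μ₃ < 2√(μ₂μ₄). -/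
/-- Mixtures of strictly absolutely separable spectra stay strictly absolutely separable:
if two decreasingly ordered probability four-tuples satisfy λ₁ − λ₃ < 2√(λ₂λ₄) and
λ'₁ − λ'₃ < 2√(λ'₂λ'₄), then for 0 < x < 1 the mixture μᵢ = xλᵢ + (1−x)λ'ᵢ satisfies
μ₁ − μ₃ < 2√(μ₂μ₄). -/
theorem stmt11 (l1 l2 l3 l4 m1 m2 m3 m4 : ℝ)
    (hl12 : l2 ≤ l1) (hl23 : l3 ≤ l2) (hl34 : l4 ≤ l3) (hl4 : 0 ≤ l4)
    (hm12 : m2 ≤ m1) (hm23 : m3 ≤ m2) (hm34 : m4 ≤ m3) (hm4 : 0 ≤ m4)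
    (hlsum : l1 + l2 + l3 + l4 = 1) (hmsum : m1 + m2 + m3 + m4 = 1)
    (hl : l1 - l3 < 2 * Real.sqrt (l2 * l4))
    (hm : m1 - m3 < 2 * Real.sqrt (m2 * m4)) :
    ∀ x : ℝ, 0 < x → x < 1 →
      (x * l1 + (1 - x) * m1) - (x * l3 + (1 - x) * m3) <
        2 * Real.sqrt ((x * l2 + (1 - x) * m2) * (x * l4 + (1 - x) * m4)) := by
  intro x hx hx1
  have hl2 : 0 ≤ l2 := le_trans hl4 (le_trans hl34 hl23)
  have hm2 : 0 ≤ m2 := le_trans hm4 (le_trans hm34 hm23)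
  set a := Real.sqrt (l2 * l4) with ha
  set b := Real.sqrt (m2 * m4) with hb
  have ha0 : 0 ≤ a := Real.sqrt_nonneg _
  have hb0 : 0 ≤ b := Real.sqrt_nonneg _
  have ha2 : a ^ 2 = l2 * l4 := Real.sq_sqrt (mul_nonneg hl2 hl4)
  have hb2 : b ^ 2 = m2 * m4 := Real.sq_sqrt (mul_nonneg hm2 hm4)
  have habeq : a * b = Real.sqrt (l2 * m4) * Real.sqrt (m2 * l4) := by
    rw [ha, hb, ← Real.sqrt_mul (mul_nonneg hl2 hl4),
      ← Real.sqrt_mul (mul_nonneg hl2 hm4)]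
    ring_nf
  have hab : a * b ≤ (l2 * m4 + m2 * l4) / 2 := by
    rw [habeq]
    nlinarith [sq_nonneg (Real.sqrt (l2 * m4) - Real.sqrt (m2 * l4)),
      Real.sq_sqrt (mul_nonneg hl2 hm4), Real.sq_sqrt (mul_nonneg hm2 hl4)]
  have key : (x * a + (1 - x) * b) ^ 2 ≤
      (x * l2 + (1 - x) * m2) * (x * l4 + (1 - x) * m4) := by
    nlinarith [mul_pos hx (sub_pos.mpr hx1)]
  have hc0 : 0 ≤ x * a + (1 - x) * b :=
    add_nonneg (mul_nonneg hx.le ha0) (mul_nonneg (by linarith) hb0)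
  have hle : x * a + (1 - x) * b ≤
      Real.sqrt ((x * l2 + (1 - x) * m2) * (x * l4 + (1 - x) * m4)) := by
    have := Real.sqrt_le_sqrt key
    rwa [Real.sqrt_sq hc0] at this
  nlinarith [mul_lt_mul_of_pos_left hl hx,
    mul_lt_mul_of_pos_left hm (sub_pos.mpr hx1)]
end

section
/- The set of decreasingly ordered probability four-tuples (λ₁, λ₂, λ₃, λ₄) satisfying λ₁ − λ₃ − 2√(λ₂λ₄) ≤ 0 is a convex and compact subset of ℝ⁴. -/
lemma sqrt_concave_aux {a b x y x' y' : ℝ} (ha : 0 ≤ a) (hb : 0 ≤ b)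
    (hx : 0 ≤ x) (hy : 0 ≤ y) (hx' : 0 ≤ x') (hy' : 0 ≤ y') :
    a * Real.sqrt (x * y) + b * Real.sqrt (x' * y') ≤
      Real.sqrt ((a * x + b * x') * (a * y + b * y')) := by
  have h1 : 0 ≤ Real.sqrt (x * y) := Real.sqrt_nonneg _
  have h2 : 0 ≤ Real.sqrt (x' * y') := Real.sqrt_nonneg _
  have hsx : Real.sqrt (x * y) ^ 2 = x * y := Real.sq_sqrt (mul_nonneg hx hy)
  have hsx' : Real.sqrt (x' * y') ^ 2 = x' * y' := Real.sq_sqrt (mul_nonneg hx' hy')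
  have hst : 2 * (Real.sqrt (x * y) * Real.sqrt (x' * y')) ≤ x * y' + x' * y := by
    have h3 : Real.sqrt (x * y) * Real.sqrt (x' * y') = Real.sqrt ((x * y') * (x' * y)) := by
      rw [← Real.sqrt_mul (mul_nonneg hx hy)]; ring_nf
    have h4 : Real.sqrt ((x * y') * (x' * y)) ≤ (x * y' + x' * y) / 2 := by
      rw [show (x * y' + x' * y) / 2 = Real.sqrt (((x * y' + x' * y) / 2) ^ 2) from
        (Real.sqrt_sq (by positivity)).symm]
      apply Real.sqrt_le_sqrt
      nlinarith [sq_nonneg (x * y' - x' * y)]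
    linarith [h3 ▸ h4]
  apply Real.le_sqrt_of_sq_le
  have key := mul_le_mul_of_nonneg_left hst (mul_nonneg ha hb)
  have e1 : a ^ 2 * Real.sqrt (x * y) ^ 2 = a ^ 2 * (x * y) := by rw [hsx]
  have e2 : b ^ 2 * Real.sqrt (x' * y') ^ 2 = b ^ 2 * (x' * y') := by rw [hsx']
  nlinarith [key, e1, e2]

/-- The set of decreasingly ordered probability four-tuples satisfying the two-qubit
absolute separability condition λ₁ − λ₃ − 2√(λ₂λ₄) ≤ 0 is convex and compact in ℝ⁴. -/
theorem stmt12 :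
    Convex ℝ {l : Fin 4 → ℝ |
        (∀ i j : Fin 4, i ≤ j → l j ≤ l i) ∧ (∀ i, 0 ≤ l i) ∧ (∑ i, l i = 1) ∧
        l 0 - l 2 - 2 * Real.sqrt (l 1 * l 3) ≤ 0} ∧
    IsCompact {l : Fin 4 → ℝ |
        (∀ i j : Fin 4, i ≤ j → l j ≤ l i) ∧ (∀ i, 0 ≤ l i) ∧ (∑ i, l i = 1) ∧
        l 0 - l 2 - 2 * Real.sqrt (l 1 * l 3) ≤ 0} := by
  constructor
  · -- Convexity
    intro l hl m hm a b ha hb hab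
    obtain ⟨ho, hn, hs, hi⟩ := hl
    obtain ⟨ho', hn', hs', hi'⟩ := hm
    have happ : ∀ i : Fin 4, (a • l + b • m) i = a * l i + b * m i := by
      intro i; simp [smul_eq_mul]
    refine ⟨?_, ?_, ?_, ?_⟩
    · intro i j hij
      rw [happ, happ]
      exact add_le_add (mul_le_mul_of_nonneg_left (ho i j hij) ha)
        (mul_le_mul_of_nonneg_left (ho' i j hij) hb)
    · intro i
      rw [happ]
      exact add_nonneg (mul_nonneg ha (hn i)) (mul_nonneg hb (hn' i))
    · simp only [happ, Finset.sum_add_distrib, ← Finset.mul_sum, hs, hs']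
      linarith
    · simp only [happ]
      have key := sqrt_concave_aux ha hb (hn 1) (hn 3) (hn' 1) (hn' 3)
      nlinarith [key]
  · -- Compactness
    have hclosed : IsClosed {l : Fin 4 → ℝ |
        (∀ i j : Fin 4, i ≤ j → l j ≤ l i) ∧ (∀ i, 0 ≤ l i) ∧ (∑ i, l i = 1) ∧
        l 0 - l 2 - 2 * Real.sqrt (l 1 * l 3) ≤ 0} := by
      have heq : {l : Fin 4 → ℝ |
          (∀ i j : Fin 4, i ≤ j → l j ≤ l i) ∧ (∀ i, 0 ≤ l i) ∧ (∑ i, l i = 1) ∧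
          l 0 - l 2 - 2 * Real.sqrt (l 1 * l 3) ≤ 0} =
          (⋂ i : Fin 4, ⋂ j : Fin 4, {l : Fin 4 → ℝ | i ≤ j → l j ≤ l i}) ∩
          ((⋂ i : Fin 4, {l : Fin 4 → ℝ | 0 ≤ l i}) ∩
          ({l : Fin 4 → ℝ | ∑ i, l i = 1} ∩
          {l : Fin 4 → ℝ | l 0 - l 2 - 2 * Real.sqrt (l 1 * l 3) ≤ 0})) := by
        ext l
        simp only [Set.mem_setOf_eq, Set.mem_inter_iff, Set.mem_iInter]
      rw [heq]
      refine IsClosed.inter ?_ (IsClosed.inter ?_ (IsClosed.inter ?_ ?_))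
      · refine isClosed_iInter fun i => isClosed_iInter fun j => ?_
        by_cases h : i ≤ j
        · simp only [h, forall_true_left]
          exact isClosed_le (continuous_apply j) (continuous_apply i)
        · have : {l : Fin 4 → ℝ | i ≤ j → l j ≤ l i} = Set.univ := by
            ext l; simp [h]
          rw [this]; exact isClosed_univ
      · exact isClosed_iInter fun i => isClosed_le continuous_const (continuous_apply i)
      · exact isClosed_eq (continuous_finset_sum _ fun i _ => continuous_apply i)
          continuous_const
      · exact isClosed_le (by fun_prop) continuous_const
    have hsub : {l : Fin 4 → ℝ |
        (∀ i j : Fin 4, i ≤ j → l j ≤ l i) ∧ (∀ i, 0 ≤ l i) ∧ (∑ i, l i = 1) ∧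
        l 0 - l 2 - 2 * Real.sqrt (l 1 * l 3) ≤ 0} ⊆
        Set.Icc (0 : Fin 4 → ℝ) 1 := by
      rintro l ⟨_, hn, hs, _⟩
      constructor
      · intro i; exact hn i
      · intro i
        have := Finset.single_le_sum (f := l) (fun j _ => hn j) (Finset.mem_univ i)
        simpa [hs] using this
    exact IsCompact.of_isClosed_subset isCompact_Icc hclosed hsub
end

section
/- For any decreasingly ordered probability four-tuple satisfying λ₁ − λ₃ ≤ 2√(λ₂λ₄), one has λ₄ > 0 unless λ₁ = λ₂ = λ₃ = 1/3; consequently every absolutely separable two-qubit state has rank at least 3. -/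
/-- For any decreasingly ordered probability four-tuple satisfying λ₁ − λ₃ ≤ 2√(λ₂λ₄),
one has λ₄ > 0 unless λ₁ = λ₂ = λ₃ = 1/3; consequently λ₃ > 0, i.e., every absolutely
separable two-qubit state has rank at least 3. -/
theorem stmt14 (l1 l2 l3 l4 : ℝ)
    (h12 : l2 ≤ l1) (h23 : l3 ≤ l2) (h34 : l4 ≤ l3) (h4 : 0 ≤ l4)
    (hsum : l1 + l2 + l3 + l4 = 1)
    (habs : l1 - l3 ≤ 2 * Real.sqrt (l2 * l4)) :
    (0 < l4 ∨ (l1 = 1/3 ∧ l2 = 1/3 ∧ l3 = 1/3)) ∧ 0 < l3 := by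
  rcases lt_or_eq_of_le h4 with hpos | heq
  · exact ⟨Or.inl hpos, lt_of_lt_of_le hpos h34⟩
  · have h0 : l4 = 0 := heq.symm
    rw [h0, mul_zero, Real.sqrt_zero, mul_zero] at habs
    have h13 : l1 ≤ l3 := by linarith
    have e1 : l1 = 1/3 := by linarith
    exact ⟨Or.inr ⟨e1, by linarith, by linarith⟩, by linarith⟩
end

section
/- Let Λ(ρ) = pρ + ((1−p)/3)(σₓρσₓ + σᵧρσᵧ + σ_zρσ_z) be the single-qubit depolarizing channel. When Λ⊗Λ is applied to the pure state |ψ⟩ = cos(x/2)|00⟩ + sin(x/2)|11⟩, the output state has negative partial transpose (is entangled) if and only if sin x > 4(1+2p)(1−p)/(4p−1)² (for 4p−1 ≠ 0). -/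
open Matrix Kronecker Complex ComplexOrder

/-- Pauli matrices. -/
noncomputable def sx : Matrix (Fin 2) (Fin 2) ℂ := !![0, 1; 1, 0]
noncomputable def sy : Matrix (Fin 2) (Fin 2) ℂ := !![0, -Complex.I; Complex.I, 0]
noncomputable def sz : Matrix (Fin 2) (Fin 2) ℂ := !![1, 0; 0, -1]

/-- Single-qubit depolarizing channel Λ(ρ) = pρ + ((1−p)/3)(σₓρσₓ + σᵧρσᵧ + σ_zρσ_z). -/
noncomputable def depol (p : ℝ) (ρ : Matrix (Fin 2) (Fin 2) ℂ) : Matrix (Fin 2) (Fin 2) ℂ :=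
  (p : ℂ) • ρ + (((1 - p) / 3 : ℝ) : ℂ) • (sx * ρ * sx + sy * ρ * sy + sz * ρ * sz)

/-- Kraus operators of the depolarizing channel. -/
noncomputable def depolKraus (p : ℝ) : Fin 4 → Matrix (Fin 2) (Fin 2) ℂ
  | 0 => (Real.sqrt p : ℂ) • 1
  | 1 => (Real.sqrt ((1 - p) / 3) : ℂ) • sx
  | 2 => (Real.sqrt ((1 - p) / 3) : ℂ) • sy
  | 3 => (Real.sqrt ((1 - p) / 3) : ℂ) • sz

/-- The two-qubit pure state |ψ⟩ = cos(x/2)|00⟩ + sin(x/2)|11⟩ as a vector. -/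
noncomputable def psi (x : ℝ) : Fin 2 × Fin 2 → ℂ := fun i =>
  if i = (0, 0) then (Real.cos (x / 2) : ℂ)
  else if i = (1, 1) then (Real.sin (x / 2) : ℂ) else 0

/-- The output state (Λ ⊗ Λ)(|ψ⟩⟨ψ|), expressed via the Kraus representation. -/
noncomputable def outState (p x : ℝ) : Matrix (Fin 2 × Fin 2) (Fin 2 × Fin 2) ℂ :=
  ∑ i : Fin 4, ∑ j : Fin 4,
    (depolKraus p i ⊗ₖ depolKraus p j) * vecMulVec (psi x) (star (psi x)) *
      (depolKraus p i ⊗ₖ depolKraus p j)ᴴ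

/-- Partial transpose on the second qubit. -/
def partialTranspose (A : Matrix (Fin 2 × Fin 2) (Fin 2 × Fin 2) ℂ) :
    Matrix (Fin 2 × Fin 2) (Fin 2 × Fin 2) ℂ :=
  Matrix.of fun i j => A (i.1, j.2) (j.1, i.2)

/-! The product of the two Kraus families acts factorwise, so
`(Λ ⊗ Λ)(|ψ⟩⟨ψ|) = ∑ ψ_k ψ_l Λ(|k⟩⟨l|) ⊗ Λ(|k⟩⟨l|)`. Since `Λ` maps populations to
`(1 + 2p)/3` and `2(1 - p)/3` and scales coherences by `(4p - 1)/3`, the output is an X-state: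
populations `a, d, d, b` on `|00⟩, |01⟩, |10⟩, |11⟩` with `d = 2(1 - p)(1 + 2p)/9`, and coherence
`c = (4p - 1)² sin x / 18` between `|00⟩` and `|11⟩`. Partial transposition moves the coherence into
the `{|01⟩, |10⟩}` block, whose eigenvalues are `d ± c`; so the partial transpose is positive iff
`c ≤ d`, which rearranges to the stated bound. -/

section Kraus

variable {R ι κ m n : Type*} [CommRing R] [Fintype ι] [Fintype κ]

lemma sum_kronecker_sum (A : ι → Matrix m m R) (B : κ → Matrix n n R) :
    (∑ i, A i) ⊗ₖ (∑ j, B j) = ∑ i, ∑ j, A i ⊗ₖ B j := by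
  ext ⟨i₁, i₂⟩ ⟨j₁, j₂⟩
  simp [Matrix.sum_apply, Finset.sum_mul_sum]

variable [StarRing R] [Fintype m] [Fintype n]

def krausMap (K : ι → Matrix m m R) : Matrix m m R →ₗ[R] Matrix m m R :=
  ∑ i, LinearMap.mulLeft R (K i) ∘ₗ LinearMap.mulRight R (K i)ᴴ

lemma krausMap_apply (K : ι → Matrix m m R) (ρ : Matrix m m R) :
    krausMap K ρ = ∑ i, K i * ρ * (K i)ᴴ := by
  simp [krausMap, mul_assoc]

lemma krausMap_kronecker (K : ι → Matrix m m R) (L : κ → Matrix n n R)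
    (A : Matrix m m R) (B : Matrix n n R) :
    krausMap (fun ij : ι × κ => K ij.1 ⊗ₖ L ij.2) (A ⊗ₖ B) = krausMap K A ⊗ₖ krausMap L B := by
  simp only [krausMap_apply, Fintype.sum_prod_type, conjTranspose_kronecker, ← mul_kronecker_mul,
    sum_kronecker_sum]

end Kraus

lemma krausMap_depolKraus {p : ℝ} (hp0 : 0 ≤ p) (hp1 : p ≤ 1) (ρ : Matrix (Fin 2) (Fin 2) ℂ) :
    krausMap (depolKraus p) ρ = depol p ρ := by
  have hq : (0 : ℝ) ≤ (1 - p) / 3 := by linarith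
  have hsx : sxᴴ = sx := by ext i j; fin_cases i <;> fin_cases j <;> simp [sx]
  have hsy : syᴴ = sy := by ext i j; fin_cases i <;> fin_cases j <;> simp [sy]
  have hsz : szᴴ = sz := by ext i j; fin_cases i <;> fin_cases j <;> simp [sz]
  simp only [krausMap_apply, Fin.sum_univ_four, depolKraus, conjTranspose_smul, conjTranspose_one,
    hsx, hsy, hsz, RCLike.star_def, conj_ofReal, smul_mul_assoc, mul_smul_comm, smul_smul,
    ← ofReal_mul, Real.mul_self_sqrt hp0, Real.mul_self_sqrt hq, mul_one, one_mul, depol, smul_add]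
  abel

lemma depol_apply (p : ℝ) (ρ : Matrix (Fin 2) (Fin 2) ℂ) :
    depol p ρ = !![(1 + 2 * p) / 3 * ρ 0 0 + 2 * (1 - p) / 3 * ρ 1 1, (4 * p - 1) / 3 * ρ 0 1;
      (4 * p - 1) / 3 * ρ 1 0, (1 + 2 * p) / 3 * ρ 1 1 + 2 * (1 - p) / 3 * ρ 0 0] := by
  ext i j
  fin_cases i <;> fin_cases j <;>
  · simp [depol, sx, sy, sz, Matrix.mul_apply, Fin.sum_univ_two, vecMul, dotProduct]
    ring_nf
    simp only [I_sq]
    ring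

lemma vecMulVec_psi (x : ℝ) :
    vecMulVec (psi x) (star (psi x)) = ∑ k : Fin 2, ∑ l : Fin 2,
      (psi x (k, k) * psi x (l, l)) • (single k l 1 ⊗ₖ single k l 1) := by
  ext ⟨i₁, i₂⟩ ⟨j₁, j₂⟩
  fin_cases i₁ <;> fin_cases i₂ <;> fin_cases j₁ <;> fin_cases j₂ <;>
    simp [psi, vecMulVec_apply, Fin.sum_univ_two, -ofReal_cos, -ofReal_sin]

lemma outState_eq_sum (p x : ℝ) (hp0 : 0 ≤ p) (hp1 : p ≤ 1) :
    outState p x = ∑ k : Fin 2, ∑ l : Fin 2,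
      (psi x (k, k) * psi x (l, l)) •
        (depol p (single k l 1) ⊗ₖ depol p (single k l 1)) := by
  have h : outState p x =
      krausMap (fun ij : Fin 4 × Fin 4 => depolKraus p ij.1 ⊗ₖ depolKraus p ij.2)
        (vecMulVec (psi x) (star (psi x))) := by
    rw [krausMap_apply, Fintype.sum_prod_type]; rfl
  simp only [h, vecMulVec_psi, map_sum, map_smul, krausMap_kronecker, krausMap_depolKraus hp0 hp1]

def xState (a b d c : ℝ) : Matrix (Fin 2 × Fin 2) (Fin 2 × Fin 2) ℂ :=
  (a : ℂ) • single (0, 0) (0, 0) 1 + (b : ℂ) • single (1, 1) (1, 1) 1 +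
    (d : ℂ) • (single (0, 1) (0, 1) 1 + single (1, 0) (1, 0) 1) +
    (c : ℂ) • (single (0, 0) (1, 1) 1 + single (1, 1) (0, 0) 1)

lemma outState_eq_xState (p x : ℝ) (hp0 : 0 ≤ p) (hp1 : p ≤ 1) :
    outState p x = xState
      (((1 + 2 * p) / 3) ^ 2 * Real.cos (x / 2) ^ 2 + (2 * (1 - p) / 3) ^ 2 * Real.sin (x / 2) ^ 2)
      (((1 + 2 * p) / 3) ^ 2 * Real.sin (x / 2) ^ 2 + (2 * (1 - p) / 3) ^ 2 * Real.cos (x / 2) ^ 2)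
      (2 * (1 - p) * (1 + 2 * p) / 9) ((4 * p - 1) ^ 2 * Real.sin x / 18) := by
  have hpyth : (Real.cos (x / 2) : ℂ) ^ 2 + (Real.sin (x / 2) : ℂ) ^ 2 = 1 := by
    exact_mod_cast Real.cos_sq_add_sin_sq (x / 2)
  have hsin : (Real.sin x : ℂ) = 2 * Real.sin (x / 2) * Real.cos (x / 2) := by
    have h := Real.sin_two_mul (x / 2)
    rw [mul_div_cancel₀ x two_ne_zero] at h
    exact_mod_cast h
  rw [outState_eq_sum p x hp0 hp1]
  ext ⟨i₁, i₂⟩ ⟨j₁, j₂⟩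
  fin_cases i₁ <;> fin_cases i₂ <;> fin_cases j₁ <;> fin_cases j₂ <;>
    simp [xState, psi, depol_apply, Fin.sum_univ_two, single_apply, hsin, -ofReal_cos,
      -ofReal_sin] <;>
    first
    | ring1
    | linear_combination (2 * (1 - p) * (1 + 2 * p) / 9 : ℂ) * hpyth

section PartialTranspose

variable (A B : Matrix (Fin 2 × Fin 2) (Fin 2 × Fin 2) ℂ)

lemma partialTranspose_add : partialTranspose (A + B) = partialTranspose A + partialTranspose B :=
  rfl

lemma partialTranspose_smul (z : ℂ) : partialTranspose (z • A) = z • partialTranspose A :=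
  rfl

lemma partialTranspose_single (i j : Fin 2 × Fin 2) (z : ℂ) :
    partialTranspose (single i j z) = single (i.1, j.2) (j.1, i.2) z := by
  ext k l
  simp only [partialTranspose, of_apply, single_apply, Prod.ext_iff]
  grind

end PartialTranspose

lemma partialTranspose_xState (a b d c : ℝ) :
    partialTranspose (xState a b d c) =
      (a : ℂ) • single (0, 0) (0, 0) 1 + (b : ℂ) • single (1, 1) (1, 1) 1 +
        (d : ℂ) • (single (0, 1) (0, 1) 1 + single (1, 0) (1, 0) 1) +
        (c : ℂ) • (single (0, 1) (1, 0) 1 + single (1, 0) (0, 1) 1) := by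
  simp only [xState, partialTranspose_add, partialTranspose_smul, partialTranspose_single]

lemma posSemidef_partialTranspose_xState_iff {a b : ℝ} (ha : 0 ≤ a) (hb : 0 ≤ b) (d c : ℝ) :
    (partialTranspose (xState a b d c)).PosSemidef ↔ |c| ≤ d := by
  rw [partialTranspose_xState]
  constructor
  · intro h
    have quadratic_form_nonneg (t : ℝ) : 0 ≤ d + 2 * c * t + d * t ^ 2 := by
      have h1 := h.dotProduct_mulVec_nonneg (Pi.single (0, 1) 1 + (t : ℂ) • Pi.single (1, 0) 1)
      simp [dotProduct, Fintype.sum_prod_type, Fin.sum_univ_two, mulVec, single_apply,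
        Pi.single_apply] at h1
      have hre : (d + c * t + t * (c + d * t) : ℂ) = ((d + 2 * c * t + d * t ^ 2 : ℝ) : ℂ) := by
        push_cast; ring
      exact_mod_cast hre ▸ h1
    have hplus := quadratic_form_nonneg 1
    have hminus := quadratic_form_nonneg (-1)
    exact abs_le.mpr ⟨by linarith, by linarith⟩
  · intro h
    let e (i : Fin 2 × Fin 2) : Fin 2 × Fin 2 → ℂ := Pi.single i 1
    -- spectral decomposition: eigenvalues `a`, `b`, `d + c`, `d - c`
    have hdecomp : (a : ℂ) • single (0, 0) (0, 0) 1 + (b : ℂ) • single (1, 1) (1, 1) 1 +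
        (d : ℂ) • (single (0, 1) (0, 1) 1 + single (1, 0) (1, 0) 1) +
        (c : ℂ) • (single (0, 1) (1, 0) 1 + single (1, 0) (0, 1) 1) =
        a • vecMulVec (e (0, 0)) (star (e (0, 0))) + b • vecMulVec (e (1, 1)) (star (e (1, 1))) +
        ((d + c) / 2) • vecMulVec (e (0, 1) + e (1, 0)) (star (e (0, 1) + e (1, 0))) +
        ((d - c) / 2) • vecMulVec (e (0, 1) - e (1, 0)) (star (e (0, 1) - e (1, 0))) := by
      ext ⟨i₁, i₂⟩ ⟨j₁, j₂⟩
      fin_cases i₁ <;> fin_cases i₂ <;> fin_cases j₁ <;> fin_cases j₂ <;>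
        simp [e, vecMulVec_apply] <;> ring
    rw [hdecomp]
    obtain ⟨hcd, hcd'⟩ := abs_le.mp h
    refine (((posSemidef_vecMulVec_self_star _).smul ha).add
      ((posSemidef_vecMulVec_self_star _).smul hb)).add ?_ |>.add ?_
    · exact (posSemidef_vecMulVec_self_star _).smul (by linarith)
    · exact (posSemidef_vecMulVec_self_star _).smul (by linarith)

/-- When Λ⊗Λ (local depolarizing channels, noise strength 1−p) is applied to
|ψ⟩ = cos(x/2)|00⟩ + sin(x/2)|11⟩, the output has negative partial transpose
(is entangled) iff sin x > 4(1+2p)(1−p)/(4p−1)². -/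
theorem stmt16 (p x : ℝ) (hp0 : 0 ≤ p) (hp1 : p ≤ 1) (hx0 : 0 ≤ x) (hxπ : x ≤ Real.pi)
    (hp : 4 * p - 1 ≠ 0) :
    ¬ (partialTranspose (outState p x)).PosSemidef ↔
      Real.sin x > 4 * (1 + 2 * p) * (1 - p) / (4 * p - 1) ^ 2 := by
  have hsin : 0 ≤ Real.sin x := Real.sin_nonneg_of_nonneg_of_le_pi hx0 hxπ
  rw [outState_eq_xState p x hp0 hp1,
    posSemidef_partialTranspose_xState_iff (by positivity) (by positivity),
    abs_of_nonneg (by positivity), not_le, gt_iff_lt, div_lt_iff₀ (sq_pos_of_ne_zero hp)]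
  constructor <;> intro h <;> linarith
end
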